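/- arXiv:2206.00094 — 2 statements merged into one kernel-verified Lean document; each statement's English description precedes it below -/
import Mathlib

section
/- Let H ∈ ℝ^{k×k} be nonzero, M ∈ ℝ^{n×n}, and let W be a linear subspace of (ℝ^k)^n. Then the following are equivalent: (i) for every function f : ℝ^k → ℝ^k the map (x_1,…,x_n) ↦ (f(x_1),…,f(x_n)) sends W into W, and the linear map x ↦ (H ∑_{j} M_{1j} x_j, …, H ∑_{j} M_{nj} x_j) sends W into W; (ii) there is a tagged partition 𝒫 of {1,…,n} whose partial involution is the empty function (i.e., Δ_𝒫 is a synchrony subspace) such that Δ_𝒫 is M-invariant and W = ℝ^k ⊗ Δ_𝒫. -/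
/-- A tagged partition of `{1,…,n}` (modeled as `Fin n`): a partition into nonempty
classes together with a partial involution on the classes having at most one fixed point.
The partial involution is encoded by `star`, with `star P = none` meaning `*` is
undefined at `P` (in particular `star P = none` for any `P` that is not a class). -/
structure TaggedPartition (n : ℕ) where
  classes : Set (Set (Fin n))
  classes_nonempty : ∀ P ∈ classes, P.Nonempty
  cover : ∀ i : Fin n, ∃ P ∈ classes, i ∈ P
  eq_of_inter : ∀ P ∈ classes, ∀ Q ∈ classes, (P ∩ Q).Nonempty → P = Q
  star : Set (Fin n) → Option (Set (Fin n))
  star_dom : ∀ P, star P ≠ none → P ∈ classes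
  star_ran : ∀ P Q, star P = some Q → Q ∈ classes
  star_invol : ∀ P Q, star P = some Q → star Q = some P
  star_fixed : ∀ P Q, star P = some P → star Q = some Q → P = Q

/-- The polydiagonal subspace `Δ_tp ⊆ ℝⁿ` of a tagged partition:
`x_i = x_j` whenever `[i] = [j]`, and `x_i = -x_j` whenever `[i]* = [j]`. -/
def TaggedPartition.polydiag {n : ℕ} (tp : TaggedPartition n) : Set (Fin n → ℝ) :=
  {x | (∀ P ∈ tp.classes, ∀ i ∈ P, ∀ j ∈ P, x i = x j) ∧
       (∀ P Q, tp.star P = some Q → ∀ i ∈ P, ∀ j ∈ Q, x i = - x j)}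

/-- `Δ_tp` is a synchrony subspace: the partial involution is the empty function. -/
def TaggedPartition.IsSynchrony {n : ℕ} (tp : TaggedPartition n) : Prop :=
  ∀ P, tp.star P = none

/-- Fully tagged: the partial involution is defined on every class. -/
def TaggedPartition.FullyTagged {n : ℕ} (tp : TaggedPartition n) : Prop :=
  ∀ P ∈ tp.classes, tp.star P ≠ none

/-- Evenly tagged: fully tagged and `#P = #P*` for every class `P`. -/
def TaggedPartition.EvenlyTagged {n : ℕ} (tp : TaggedPartition n) : Prop :=
  tp.FullyTagged ∧ ∀ P Q, tp.star P = some Q → P.ncard = Q.ncard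

/-- The subspace `ℝᵏ ⊗ Δ_tp ⊆ (ℝᵏ)ⁿ`: `x_i = x_j` whenever `[i] = [j]`, and
`x_i = -x_j` whenever `[i]* = [j]`. -/
def TaggedPartition.polydiagV {n : ℕ} (tp : TaggedPartition n) (k : ℕ) :
    Set (Fin n → Fin k → ℝ) :=
  {x | (∀ P ∈ tp.classes, ∀ i ∈ P, ∀ j ∈ P, x i = x j) ∧
       (∀ P Q, tp.star P = some Q → ∀ i ∈ P, ∀ j ∈ Q, x i = - x j)}


/-!
Over an infinite field a finite union of proper subspaces is proper, so a subspace
`W ⊆ (ℝᵏ)ⁿ` contains a vector `z` with `z i = z j` only when every vector of `W` agrees at `i`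
and `j`. If `W` is invariant under every diagonal map `x ↦ (f (x i))ᵢ`, then each `x` that is
constant on the fibres of `z` is of the form `f ∘ z`, so `W` is exactly the set of such `x`, i.e.
`ℝᵏ ⊗ Δ` for the synchrony subspace `Δ` of the partition into fibres of `z`. Feeding the vectors
`v ⊗ e_b` (`v ∈ Δ`) to the coupling map and reading off coordinate `a` with `H a b ≠ 0` shows that
`Δ` is `M`-invariant. The converse is a direct check.
-/

open Function Matrix

theorem Submodule.exists_mem_forall_factorsThrough {K ι V : Type*} [Field K] [Infinite K]
    [Finite ι] [AddCommGroup V] [Module K V] (W : Submodule K (ι → V)) :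
    ∃ z ∈ W, ∀ x ∈ W, x.FactorsThrough z := by
  let D : Type _ := {p : ι × ι // ∃ w ∈ W, w p.1 ≠ w p.2}
  let agree (p : D) : Submodule K W :=
    LinearMap.ker
      ((LinearMap.proj (R := K) (φ := fun _ => V) p.1.1 - LinearMap.proj p.1.2) ∘ₗ W.subtype)
  have agree_ne_top (p : D) : agree p ≠ ⊤ := by
    obtain ⟨w, hw, hne⟩ := p.2
    refine fun htop => hne (sub_eq_zero.1 ?_)
    exact LinearMap.mem_ker.1 (htop ▸ Submodule.mem_top : (⟨w, hw⟩ : W) ∈ agree p)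
  obtain ⟨⟨z, hz⟩, hsep⟩ := Submodule.exists_forall_notMem_of_forall_ne_top agree agree_ne_top
  refine ⟨z, hz, fun x hx i j hij => ?_⟩
  by_contra hne
  exact hsep ⟨(i, j), x, hx, hne⟩ (LinearMap.mem_ker.2 (sub_eq_zero.2 hij))

theorem mem_iff_factorsThrough_of_forall_comp_mem {ι V : Type*} [Inhabited V] {S : Set (ι → V)}
    (hS : ∀ f : V → V, ∀ x ∈ S, (fun i => f (x i)) ∈ S) {z : ι → V} (hz : z ∈ S)
    (hsep : ∀ x ∈ S, x.FactorsThrough z) (x : ι → V) :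
    x ∈ S ↔ x.FactorsThrough z := by
  refine ⟨hsep x, fun hx => ?_⟩
  simpa only [hx.extend_apply] using hS (extend z x default) z hz

theorem Matrix.sum_smul_apply {m l R : Type*} [Fintype m] [Semiring R]
    (M : Matrix m m R) (x : m → l → R) (i : m) (c : l) :
    (∑ j, M i j • x j) c = (M *ᵥ fun j => x j c) i := by
  simp [Finset.sum_apply, Matrix.mulVec, dotProduct]

theorem Matrix.mulVec_factorsThrough {m l α R : Type*} [Fintype m] [Fintype l] [DecidableEq l]
    [CommRing R] [IsDomain R] {H : Matrix l l R} (hH : H ≠ 0) {M : Matrix m m R} {z : m → α}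
    (hc : ∀ x : m → l → R, x.FactorsThrough z →
      (fun i => H *ᵥ ∑ j, M i j • x j).FactorsThrough z)
    {v : m → R} (hv : v.FactorsThrough z) :
    (M *ᵥ v).FactorsThrough z := by
  obtain ⟨a, b, hab⟩ : ∃ a b, H a b ≠ 0 := by
    by_contra! h
    exact hH (Matrix.ext h)
  have coupling_apply (i : m) :
      (H *ᵥ ∑ j, M i j • Pi.single b (v j)) a = H a b * (M *ᵥ v) i := by
    rw [show ∑ j, M i j • Pi.single b (v j) = Pi.single b ((M *ᵥ v) i) by
      ext c; rw [Matrix.sum_smul_apply]; by_cases hcb : c = b <;> simp [hcb, Matrix.mulVec]]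
    simp
  intro i j hij
  have hx : (fun j => Pi.single (M := fun _ => R) b (v j)).FactorsThrough z :=
    fun i j hij => by simp only [hv hij]
  have := congrFun (hc _ hx hij) a
  dsimp only at this
  rw [coupling_apply, coupling_apply] at this
  exact mul_left_cancel₀ hab this

namespace TaggedPartition

variable {n : ℕ} {α : Type*}

def SameClass (tp : TaggedPartition n) (i j : Fin n) : Prop :=
  ∃ P ∈ tp.classes, i ∈ P ∧ j ∈ P

theorem IsSynchrony.mem_polydiag_iff {tp : TaggedPartition n} (hs : tp.IsSynchrony)
    {x : Fin n → ℝ} : x ∈ tp.polydiag ↔ ∀ i j, tp.SameClass i j → x i = x j := by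
  simp only [polydiag, hs _, reduceCtorEq, false_implies, implies_true, and_true]
  exact ⟨fun h i j ⟨P, hP, hi, hj⟩ => h P hP i hi j hj,
    fun h P hP i hi j hj => h i j ⟨P, hP, hi, hj⟩⟩

theorem IsSynchrony.mem_polydiagV_iff {tp : TaggedPartition n} (hs : tp.IsSynchrony) {k : ℕ}
    {x : Fin n → Fin k → ℝ} : x ∈ tp.polydiagV k ↔ ∀ i j, tp.SameClass i j → x i = x j := by
  simp only [polydiagV, hs _, reduceCtorEq, false_implies, implies_true, and_true]
  exact ⟨fun h i j ⟨P, hP, hi, hj⟩ => h P hP i hi j hj,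
    fun h P hP i hi j hj => h i j ⟨P, hP, hi, hj⟩⟩

def ofSetoid (s : Setoid (Fin n)) : TaggedPartition n where
  classes := s.classes
  classes_nonempty _ := Setoid.nonempty_of_mem_partition (Setoid.isPartition_classes s)
  cover i := ⟨_, s.mem_classes i, s.refl i⟩
  eq_of_inter _ hP _ hQ := fun ⟨_, hiP, hiQ⟩ => Setoid.eq_of_mem_classes hP hiP hQ hiQ
  star _ := none
  star_dom _ h := absurd rfl h
  star_ran _ _ := nofun
  star_invol _ _ := nofun
  star_fixed _ _ := nofun

theorem isSynchrony_ofSetoid (s : Setoid (Fin n)) : (ofSetoid s).IsSynchrony := fun _ => rfl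

theorem sameClass_ofSetoid {s : Setoid (Fin n)} {i j : Fin n} :
    (ofSetoid s).SameClass i j ↔ s i j :=
  (s.rel_iff_exists_classes).symm

theorem mem_polydiag_ofSetoid_ker {z : Fin n → α} {v : Fin n → ℝ} :
    v ∈ (ofSetoid (Setoid.ker z)).polydiag ↔ v.FactorsThrough z := by
  simp only [(isSynchrony_ofSetoid _).mem_polydiag_iff, sameClass_ofSetoid, Setoid.ker_def]
  rfl

theorem mem_polydiagV_ofSetoid_ker {z : Fin n → α} {k : ℕ} {x : Fin n → Fin k → ℝ} :
    x ∈ (ofSetoid (Setoid.ker z)).polydiagV k ↔ x.FactorsThrough z := by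
  simp only [(isSynchrony_ofSetoid _).mem_polydiagV_iff, sameClass_ofSetoid, Setoid.ker_def]
  rfl

namespace IsSynchrony

variable {tp : TaggedPartition n} {k : ℕ} {x : Fin n → Fin k → ℝ}

theorem comp_mem_polydiagV (hs : tp.IsSynchrony) (f : (Fin k → ℝ) → Fin k → ℝ)
    (hx : x ∈ tp.polydiagV k) :
    (fun i => f (x i)) ∈ tp.polydiagV k := by
  rw [hs.mem_polydiagV_iff] at hx ⊢
  exact fun i j hij => congrArg f (hx i j hij)

theorem sum_smul_mem_polydiagV (hs : tp.IsSynchrony) {M : Matrix (Fin n) (Fin n) ℝ}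
    (hM : ∀ v ∈ tp.polydiag, M *ᵥ v ∈ tp.polydiag) (hx : x ∈ tp.polydiagV k) :
    (fun i => ∑ j, M i j • x j) ∈ tp.polydiagV k := by
  rw [hs.mem_polydiagV_iff] at hx ⊢
  intro i j hij
  ext c
  have hxc : (fun l => x l c) ∈ tp.polydiag :=
    hs.mem_polydiag_iff.2 fun i j h => congrFun (hx i j h) c
  simpa only [sum_smul_apply] using hs.mem_polydiag_iff.1 (hM _ hxc) i j hij

end IsSynchrony

end TaggedPartition

/-- Proposition 4.4(3). For nonzero `H`, a subspace
`W ⊆ (ℝᵏ)ⁿ` is invariant under all diagonal maps built from arbitrary `f` and under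
the linear coupling map iff `W = ℝᵏ ⊗ Δ_tp` for some `M`-invariant synchrony
subspace `Δ_tp`. -/
theorem invariant_all_f_iff_synchrony {k n : ℕ}
    (H : Matrix (Fin k) (Fin k) ℝ) (hH : H ≠ 0) (M : Matrix (Fin n) (Fin n) ℝ)
    (W : Submodule ℝ (Fin n → Fin k → ℝ)) :
    ((∀ f : (Fin k → ℝ) → Fin k → ℝ, ∀ x ∈ W, (fun i => f (x i)) ∈ W) ∧
      (∀ x ∈ W, (fun i => H.mulVec (∑ j, M i j • x j)) ∈ W)) ↔
    (∃ tp : TaggedPartition n, tp.IsSynchrony ∧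
      (∀ x ∈ tp.polydiag, M.mulVec x ∈ tp.polydiag) ∧
      (W : Set (Fin n → Fin k → ℝ)) = tp.polydiagV k) := by
  open TaggedPartition in
  constructor
  · rintro ⟨hf, hc⟩
    obtain ⟨z, hz, hsep⟩ := W.exists_mem_forall_factorsThrough
    have hW : ∀ x : Fin n → Fin k → ℝ, x ∈ (W : Set _) ↔ x.FactorsThrough z :=
      mem_iff_factorsThrough_of_forall_comp_mem hf hz hsep
    refine ⟨ofSetoid (Setoid.ker z), isSynchrony_ofSetoid _, fun v hv => ?_, ?_⟩
    · rw [mem_polydiag_ofSetoid_ker] at hv ⊢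
      exact mulVec_factorsThrough hH (fun x hx => (hW _).1 (hc x ((hW x).2 hx))) hv
    · ext x
      rw [hW, mem_polydiagV_ofSetoid_ker]
  · rintro ⟨tp, hs, hM, hWeq⟩
    have hW (x) : x ∈ W ↔ x ∈ tp.polydiagV k := by rw [← SetLike.mem_coe, hWeq]
    refine ⟨fun f x hx => (hW _).2 (hs.comp_mem_polydiagV f ((hW x).1 hx)), fun x hx => ?_⟩
    exact (hW _).2 <|
      hs.comp_mem_polydiagV (H *ᵥ ·) (hs.sum_smul_mem_polydiagV hM ((hW x).1 hx))
end

section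
/- Let n ≥ 1 and let M ∈ ℝ^{n×n} have all column sums equal to λ ∈ ℝ. Assume the eigenspace of M for the eigenvalue λ is one-dimensional, and let v be an eigenvector of M with eigenvalue λ satisfying v_i + v_j ≠ 0 for all i and j (including i = j). Then every M-invariant polydiagonal subspace Δ_𝒫 ⊆ ℝ^n is either a synchrony subspace that contains v, or an evenly tagged anti-synchrony subspace that does not contain v. -/
/-!
`M - μ` maps ℝⁿ into the hyperplane of sum-zero vectors, so on an `M`-invariant subspace
`W` containing a vector of nonzero sum it is not surjective, hence not injective: `W` meets
the `μ`-eigenspace, which is the line through `v`, so `v ∈ W`.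
For a synchrony subspace the all-ones vector has nonzero sum. For an anti-synchrony subspace
`v ∉ Δ_𝒫`, because `v_i + v_j ≠ 0` rules out `v_i = -v_j`; and if `𝒫` were not evenly
tagged, the indicator of an untagged class, or `1_P - 1_{P*}` with `#P ≠ #P*`, would be a
vector of nonzero sum in `Δ_𝒫`.
-/

theorem LinearMap.ker_le_of_mapsTo_of_notMem_range {K V : Type*} [Field K] [AddCommGroup V]
    [Module K V] [FiniteDimensional K V] {f : V →ₗ[K] V} (hf : Module.finrank K (ker f) = 1)
    {W : Submodule K V} (hW : ∀ x ∈ W, f x ∈ W) {x₀ : V} (hx₀ : x₀ ∈ W)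
    (hx₀_range : x₀ ∉ range f) : ker f ≤ W := by
  have hnot_surj : ¬ Function.Surjective (f.restrict hW) := fun hsurj => by
    obtain ⟨y, hy⟩ := hsurj ⟨x₀, hx₀⟩
    exact hx₀_range ⟨y, congrArg Subtype.val hy⟩
  have hmeet : W ⊓ ker f ≠ ⊥ := by
    rwa [← injective_iff_surjective, injective_restrict_iff, disjoint_iff] at hnot_surj
  have hle : W ⊓ ker f = ker f :=
    Submodule.eq_of_le_of_finrank_le inf_le_right (hf ▸ Submodule.one_le_finrank_iff.mpr hmeet)
  exact hle ▸ inf_le_left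

theorem Matrix.sum_mulVec_of_forall_sum_col_eq {n : Type*} [Fintype n] {R : Type*} [CommSemiring R]
    {M : Matrix n n R} {μ : R} (hcol : ∀ j, ∑ i, M i j = μ) (x : n → R) :
    ∑ i, (M.mulVec x) i = μ * ∑ i, x i := by
  simp only [Matrix.mulVec, dotProduct, Finset.mul_sum]
  rw [Finset.sum_comm]
  exact Finset.sum_congr rfl fun j _ => by rw [← Finset.sum_mul, hcol]

namespace TaggedPartition

variable {n : ℕ} (tp : TaggedPartition n)

def polydiagSubmodule : Submodule ℝ (Fin n → ℝ) where
  carrier := tp.polydiag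
  zero_mem' := ⟨fun _ _ _ _ _ _ => rfl, fun _ _ _ _ _ _ _ => neg_zero.symm⟩
  add_mem' := by
    rintro x y ⟨hx₁, hx₂⟩ ⟨hy₁, hy₂⟩
    refine ⟨fun P hP i hi j hj => ?_, fun P Q h i hi j hj => ?_⟩
    · simp only [Pi.add_apply, hx₁ P hP i hi j hj, hy₁ P hP i hi j hj]
    · simp only [Pi.add_apply, hx₂ P Q h i hi j hj, hy₂ P Q h i hi j hj, neg_add]
  smul_mem' := by
    rintro c x ⟨hx₁, hx₂⟩
    refine ⟨fun P hP i hi j hj => ?_, fun P Q h i hi j hj => ?_⟩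
    · simp only [Pi.smul_apply, hx₁ P hP i hi j hj]
    · simp only [Pi.smul_apply, hx₂ P Q h i hi j hj, smul_neg]

variable {tp}

theorem mem_iff_eq {P R : Set (Fin n)} (hP : P ∈ tp.classes) (hR : R ∈ tp.classes) {i : Fin n}
    (hi : i ∈ P) : i ∈ R ↔ P = R :=
  ⟨fun hiR => tp.eq_of_inter P hP R hR ⟨i, hi, hiR⟩, fun h => h ▸ hi⟩

theorem eq_iff_eq_of_star_eq_some {A B P Q : Set (Fin n)} (hAB : tp.star A = some B)
    (hPQ : tp.star P = some Q) : A = P ↔ B = Q := by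
  constructor
  · rintro rfl
    exact Option.some_injective _ (hAB.symm.trans hPQ)
  · rintro rfl
    exact Option.some_injective _ ((tp.star_invol A B hAB).symm.trans (tp.star_invol P B hPQ))

theorem mem_polydiag_of_eq_classFun {x : Fin n → ℝ} (g : Set (Fin n) → ℝ)
    (hx : ∀ P ∈ tp.classes, ∀ i ∈ P, x i = g P) (hg : ∀ P Q, tp.star P = some Q → g Q = -g P) :
    x ∈ tp.polydiag :=
  ⟨fun P hP i hi j hj => by rw [hx P hP i hi, hx P hP j hj],
    fun P Q hPQ i hi j hj => by
      rw [hx P (tp.star_dom P (by simp [hPQ])) i hi, hx Q (tp.star_ran P Q hPQ) j hj, hg P Q hPQ,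
        neg_neg]⟩

theorem one_mem_polydiag (hsync : tp.IsSynchrony) : (1 : Fin n → ℝ) ∈ tp.polydiag :=
  mem_polydiag_of_eq_classFun 1 (fun _ _ _ _ => rfl) fun P Q hPQ => by simp [hsync P] at hPQ

theorem indicator_mem_polydiag {R : Set (Fin n)} (hR : R ∈ tp.classes) (hstar : tp.star R = none) :
    R.indicator 1 ∈ tp.polydiag := by
  classical
  refine mem_polydiag_of_eq_classFun (fun P => if P = R then 1 else 0)
    (fun P hP i hi => by simp [Set.indicator_apply, mem_iff_eq hP hR hi]) fun P Q hPQ => ?_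
  have hP : P ≠ R := by rintro rfl; simp [hstar] at hPQ
  have hQ : Q ≠ R := by rintro rfl; simp [tp.star_invol P Q hPQ] at hstar
  simp [hP, hQ]

theorem indicator_sub_indicator_mem_polydiag {P Q : Set (Fin n)} (hPQ : tp.star P = some Q) :
    P.indicator 1 - Q.indicator 1 ∈ tp.polydiag := by
  classical
  have hP := tp.star_dom P (by simp [hPQ])
  have hQ := tp.star_ran P Q hPQ
  refine mem_polydiag_of_eq_classFun
    (fun R => (if R = P then 1 else 0) - (if R = Q then 1 else 0))
    (fun R hR i hi => by simp [Set.indicator_apply, mem_iff_eq hR hP hi, mem_iff_eq hR hQ hi])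
    fun A B hAB => ?_
  simp only [eq_iff_eq_of_star_eq_some hAB hPQ,
    eq_iff_eq_of_star_eq_some hAB (tp.star_invol P Q hPQ)]
  ring

theorem sum_indicator_one (R : Set (Fin n)) : ∑ i, R.indicator (1 : Fin n → ℝ) i = R.ncard := by
  classical
  rw [Finset.sum_indicator_eq_sum_filter]
  simp [Set.ncard_eq_toFinset_card']

theorem exists_mem_polydiag_sum_ne_zero_of_not_evenlyTagged (h : ¬ tp.EvenlyTagged) :
    ∃ x ∈ tp.polydiag, ∑ i, x i ≠ 0 := by
  simp only [EvenlyTagged, FullyTagged, not_and_or, not_forall, not_not] at h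
  rcases h with ⟨R, hR, hstar⟩ | ⟨P, Q, hPQ, hcard⟩
  · refine ⟨_, indicator_mem_polydiag hR hstar, ?_⟩
    obtain ⟨r, hr⟩ := tp.classes_nonempty R hR
    rw [sum_indicator_one, Nat.cast_ne_zero]
    exact Set.ncard_ne_zero_of_mem hr
  · refine ⟨_, indicator_sub_indicator_mem_polydiag hPQ, ?_⟩
    simp only [Pi.sub_apply, Finset.sum_sub_distrib, sum_indicator_one, sub_ne_zero]
    exact_mod_cast hcard

theorem notMem_polydiag {v : Fin n → ℝ} (hv : ∀ i j, v i + v j ≠ 0) {P Q : Set (Fin n)}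
    (hPQ : tp.star P = some Q) : v ∉ tp.polydiag := by
  rintro ⟨-, hanti⟩
  obtain ⟨i, hi⟩ := tp.classes_nonempty P (tp.star_dom P (by simp [hPQ]))
  obtain ⟨j, hj⟩ := tp.classes_nonempty Q (tp.star_ran P Q hPQ)
  exact hv i j (by rw [hanti P Q hPQ i hi j hj, neg_add_cancel])

end TaggedPartition

theorem mainTheorem_general {n : ℕ} (hn : 1 ≤ n) (M : Matrix (Fin n) (Fin n) ℝ) (μ : ℝ)
    (hcol : ∀ j, ∑ i, M i j = μ)
    (hgeom : Module.finrank ℝ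
      (LinearMap.ker (M.mulVecLin - μ • (LinearMap.id : (Fin n → ℝ) →ₗ[ℝ] (Fin n → ℝ)))) = 1)
    (v : Fin n → ℝ) (hv : M.mulVec v = μ • v)
    (hvsum : ∀ i j, v i + v j ≠ 0)
    (tp : TaggedPartition n) (hinv : ∀ x ∈ tp.polydiag, M.mulVec x ∈ tp.polydiag) :
    (tp.IsSynchrony ∧ v ∈ tp.polydiag) ∨
    (¬ tp.IsSynchrony ∧ tp.EvenlyTagged ∧ v ∉ tp.polydiag) := by
  have hv_mem : ∀ x ∈ tp.polydiag, ∑ i, x i ≠ 0 → v ∈ tp.polydiag := fun x hx hsum => by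
    refine LinearMap.ker_le_of_mapsTo_of_notMem_range hgeom (W := tp.polydiagSubmodule)
      (fun y hy => sub_mem (hinv y hy) (Submodule.smul_mem _ μ hy)) hx ?_ ?_
    · rintro ⟨y, rfl⟩
      refine hsum ?_
      simp [Finset.sum_sub_distrib, Matrix.sum_mulVec_of_forall_sum_col_eq hcol, Finset.mul_sum]
    · simp [hv]
  by_cases hsync : tp.IsSynchrony
  · refine .inl ⟨hsync, hv_mem 1 (TaggedPartition.one_mem_polydiag hsync) ?_⟩
    simp only [Pi.one_apply, Finset.sum_const, Finset.card_univ, Fintype.card_fin, nsmul_eq_mul,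
      mul_one, Nat.cast_ne_zero]
    omega
  · obtain ⟨P, hP⟩ := not_forall.mp hsync
    obtain ⟨Q, hPQ⟩ := Option.ne_none_iff_exists'.mp hP
    have hv_not := TaggedPartition.notMem_polydiag hvsum hPQ
    refine .inr ⟨hsync, by_contra fun heven => ?_, hv_not⟩
    obtain ⟨x, hx, hsum⟩ :=
      TaggedPartition.exists_mem_polydiag_sum_ne_zero_of_not_evenlyTagged heven
    exact hv_not (hv_mem x hx hsum)

/-- Theorem 6.3, the main theorem. Let `M` have all column sums equal
to `μ`, with one-dimensional eigenspace for `μ`, and let `v` be an eigenvector of `M`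
with eigenvalue `μ` satisfying `v i + v j ≠ 0` for all `i, j`. Then every `M`-invariant
polydiagonal subspace is a synchrony subspace containing `v` or an evenly tagged
anti-synchrony subspace not containing `v`. -/
theorem mainTheorem {n : ℕ} (hn : 1 ≤ n) (M : Matrix (Fin n) (Fin n) ℝ) (μ : ℝ)
    (hcol : ∀ j, ∑ i, M i j = μ)
    (hgeom : Module.finrank ℝ
      (LinearMap.ker (M.mulVecLin - μ • (LinearMap.id : (Fin n → ℝ) →ₗ[ℝ] (Fin n → ℝ)))) = 1)
    (v : Fin n → ℝ) (hv0 : v ≠ 0) (hv : M.mulVec v = μ • v)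
    (hvsum : ∀ i j, v i + v j ≠ 0)
    (tp : TaggedPartition n) (hinv : ∀ x ∈ tp.polydiag, M.mulVec x ∈ tp.polydiag) :
    (tp.IsSynchrony ∧ v ∈ tp.polydiag) ∨
    (¬ tp.IsSynchrony ∧ tp.EvenlyTagged ∧ v ∉ tp.polydiag) :=
  mainTheorem_general hn M μ hcol hgeom v hv hvsum tp hinv
end
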